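/- arXiv:1605.03069 — 2 statements merged into one kernel-verified Lean document; each statement's English description precedes it below -/
import Mathlib

section
/- Let 0 < a < 1, 0 < b < 1 with a·b/(1-b) ≤ 1 and a > 1 - b. Then the minimal nonnegative fixed point of H(x) = 1 - a + a·x·exp(b(1-b)^{-1}(x-1)) on [0,1] is strictly greater than 1 - a. -/
/-- The map `x ↦ 1 - a + a x E` exceeds `1 - a` at every `x > 0`, and `0` is not a fixed point
because `1 - a ≠ 0`. -/
theorem one_sub_lt_of_one_sub_add_mul_mul_eq {a E x : ℝ} (ha0 : 0 < a) (ha1 : a < 1)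
    (hE : 0 < E) (hx : 0 ≤ x) (h : 1 - a + a * x * E = x) : 1 - a < x := by
  have hx0 : 0 < x := by
    refine hx.lt_of_ne ?_
    rintro rfl
    simp only [mul_zero, zero_mul, add_zero] at h
    linarith
  calc 1 - a < 1 - a + a * x * E := lt_add_of_pos_right _ (by positivity)
    _ = x := h

theorem stmt_3_general (a b : ℝ) (ha0 : 0 < a) (ha1 : a < 1)
    (q : ℝ)
    (hq : IsLeast {x : ℝ | x ∈ Set.Icc (0 : ℝ) 1 ∧
      1 - a + a * x * Real.exp (b * (1 - b)⁻¹ * (x - 1)) = x} q) :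
    q > 1 - a :=
  one_sub_lt_of_one_sub_add_mul_mul_eq ha0 ha1 (Real.exp_pos _) hq.1.1.1 hq.1.2

/-- For `0 < a < 1`, `0 < b < 1` with `a·b/(1-b) ≤ 1` and `a > 1 - b`, the minimal
nonnegative fixed point of `H(x) = 1 - a + a·x·exp(b(1-b)⁻¹(x-1))` on `[0,1]` is `> 1 - a`. -/
theorem stmt_3 (a b : ℝ) (ha0 : 0 < a) (ha1 : a < 1) (hb0 : 0 < b) (hb1 : b < 1)
    (hmean : a * b / (1 - b) ≤ 1) (hab : a > 1 - b)
    (q : ℝ)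
    (hq : IsLeast {x : ℝ | x ∈ Set.Icc (0 : ℝ) 1 ∧
      1 - a + a * x * Real.exp (b * (1 - b)⁻¹ * (x - 1)) = x} q) :
    q > 1 - a :=
  stmt_3_general a b ha0 ha1 q hq
end

section
/- Let 0 < p, 0 < ε < 1 with 3pε² < 1, and define the sequence m_k = 3p·ε^{2^{k-1}} for k ≥ 2, with the recursion m_k = ε^{2^{k-1}} · (∑_{j≥0} m_{k-1}^j) · 3p(1 - 3p·ε^{2^{k-2}}) for k ≥ 3 and m_2 = 3p·ε². Then m_k = 3p·ε^{2^{k-1}} for all k ≥ 2, and in particular m_k < 1 for all k ≥ 2. -/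
/-! The factor `∑ⱼ m^j = (1 - m)⁻¹` of the recursion cancels against `1 - m`, where by induction
`m = m_{k-1} = 3p·ε^{2^{k-2}}`; what remains is `3p·ε^{2^{k-1}}`. Since `ε ≤ 1`, these values
decrease in `k`, so all of them are below `m_2 = 3p·ε² < 1`, which keeps the series convergent. -/

theorem tsum_geometric_mul_one_sub {K : Type*} [NormedDivisionRing K] [CompleteSpace K] {ξ : K}
    (h : ‖ξ‖ < 1) : (∑' n : ℕ, ξ ^ n) * (1 - ξ) = 1 := by
  have hξ : ξ ≠ 1 := by
    rintro rfl
    simp at h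
  rw [tsum_geometric_of_norm_lt_one h, inv_mul_cancel₀ (sub_ne_zero.mpr hξ.symm)]

theorem mul_pow_two_pow_lt_one {c ε : ℝ} (hc : 0 ≤ c) (hε0 : 0 ≤ ε) (hε1 : ε ≤ 1)
    (h : c * ε ^ 2 < 1) {n : ℕ} (hn : 1 ≤ n) : c * ε ^ 2 ^ n < 1 := by
  have h2 : 2 ≤ 2 ^ n := by simpa using Nat.pow_le_pow_right two_pos hn
  calc c * ε ^ 2 ^ n ≤ c * ε ^ 2 :=
        mul_le_mul_of_nonneg_left (pow_le_pow_of_le_one hε0 hε1 h2) hc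
    _ < 1 := h

/-- For `0 < p`, `0 < ε < 1` with `3pε² < 1`: if `m 2 = 3p·ε²` and for `k ≥ 3`,
`m k = ε^{2^{k-1}} · (∑_{j≥0} (m (k-1))^j) · 3p(1 - 3p·ε^{2^{k-2}})`, then
`m k = 3p·ε^{2^{k-1}}` for all `k ≥ 2`, and in particular `m k < 1` for all `k ≥ 2`. -/
theorem stmt_7 (p ε : ℝ) (hp : 0 < p) (hε0 : 0 < ε) (hε1 : ε < 1)
    (hpε : 3 * p * ε ^ 2 < 1) (m : ℕ → ℝ)
    (hm2 : m 2 = 3 * p * ε ^ 2)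
    (hrec : ∀ k : ℕ, 3 ≤ k →
      m k = ε ^ (2 ^ (k - 1)) * (∑' j : ℕ, (m (k - 1)) ^ j)
        * (3 * p * (1 - 3 * p * ε ^ (2 ^ (k - 2))))) :
    ∀ k : ℕ, 2 ≤ k → m k = 3 * p * ε ^ (2 ^ (k - 1)) ∧ m k < 1 := by
  have hlt : ∀ n, 1 ≤ n → 3 * p * ε ^ 2 ^ n < 1 := fun n =>
    mul_pow_two_pow_lt_one (by positivity) hε0.le hε1.le hpε
  have hclosed : ∀ k, 2 ≤ k → m k = 3 * p * ε ^ 2 ^ (k - 1) := by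
    intro k hk
    induction k, hk using Nat.le_induction with
    | base => exact hm2
    | succ n hn ih =>
      set a := 3 * p * ε ^ 2 ^ (n - 1)
      have ha : ‖a‖ < 1 := by
        rw [Real.norm_of_nonneg (by positivity)]
        exact hlt (n - 1) (by omega)
      rw [hrec (n + 1) (by omega), Nat.add_sub_cancel, show n + 1 - 2 = n - 1 by omega, ih]
      calc ε ^ 2 ^ n * (∑' j : ℕ, a ^ j) * (3 * p * (1 - a))
          = 3 * p * ε ^ 2 ^ n * ((∑' j : ℕ, a ^ j) * (1 - a)) := by ring
        _ = 3 * p * ε ^ 2 ^ n := by rw [tsum_geometric_mul_one_sub ha, mul_one]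
  intro k hk
  exact ⟨hclosed k hk, hclosed k hk ▸ hlt (k - 1) (by omega)⟩
end
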